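/- Let g : ℂ → ℂ be continuously differentiable (over ℝ) with compact support. Suppose u : ℂ → ℂ is continuous, u(z) → 0 as |z| → ∞, and u is a distributional solution of (∂̄ + ∂̄g)u = 0, i.e. for every continuously differentiable compactly supported φ : ℂ → ℂ one has ∫_ℂ u(z)·(−∂̄φ(z) + ∂̄g(z)·φ(z)) dA(z) = 0. Then u ≡ 0. (Hence the kernel S(z) = exp(g(w)−g(z))/(π(z−w)) is the unique inverting kernel for ∂̄ + ∂̄g that vanishes at infinity.) -/

import Mathlib

/-!
Multiplying by the integrating factor `e^g` removes the zeroth-order term: since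
`∂̄(e^g φ) = e^g (∂̄φ + ∂̄g · φ)`, the function `w = u e^g` satisfies `∂̄w = 0` in the weak sense.
Weyl's lemma for `∂̄` makes `w` entire: each mollification `w ⋆ ρ` has
`∂̄(w ⋆ ρ)(x) = ∫ w · ∂̄ρ(x - ·)`, which vanishes by the weak equation, and these entire functions
converge to `w` locally uniformly. As `g` has compact support, `w = u` near infinity, so `w → 0`
there and Liouville's theorem gives `w ≡ 0`, hence `u ≡ 0`.
-/

open Filter Topology MeasureTheory

/-- Wirtinger derivative `∂̄f(z) = ½(∂ₓf(z) + i ∂ᵧf(z))`, where `∂ₓf(z)` and `∂ᵧf(z)`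
are the real-Fréchet derivatives of `f` at `z` in the directions `1` and `i`. -/
noncomputable def dbar (f : ℂ → ℂ) (z : ℂ) : ℂ :=
  (1 / 2) * (fderiv ℝ f z 1 + Complex.I * fderiv ℝ f z Complex.I)

open scoped Convolution

theorem HasFDerivAt.dbar_eq {f : ℂ → ℂ} {L : ℂ →L[ℝ] ℂ} {z : ℂ} (h : HasFDerivAt f L z) :
    dbar f z = (1 / 2) * (L 1 + Complex.I * L Complex.I) := by
  rw [dbar, h.fderiv]

theorem ContinuousLinearMap.restrictScalars_smul_id_of_map_I {L : ℂ →L[ℝ] ℂ}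
    (hI : L Complex.I = Complex.I * L 1) :
    (L 1 • ContinuousLinearMap.id ℂ ℂ).restrictScalars ℝ = L := by
  ext c
  have hc : c = c.re • (1 : ℂ) + c.im • Complex.I := by simp [Complex.real_smul]
  conv_rhs => rw [hc, map_add, map_smul, map_smul, hI]
  simp only [coe_restrictScalars', smul_apply, id_apply, Complex.real_smul, smul_eq_mul]
  linear_combination (L 1) * (Complex.re_add_im c).symm

theorem HasFDerivAt.differentiableAt_of_dbar_eq_zero {f : ℂ → ℂ} {L : ℂ →L[ℝ] ℂ} {z : ℂ}
    (h : HasFDerivAt f L z) (h0 : dbar f z = 0) : DifferentiableAt ℂ f z := by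
  rw [h.dbar_eq] at h0
  have hI : L Complex.I = Complex.I * L 1 := by
    linear_combination (-2 * Complex.I) * h0 + L Complex.I * Complex.I_sq
  exact (hasFDerivAt_of_restrictScalars ℝ h
    (ContinuousLinearMap.restrictScalars_smul_id_of_map_I hI)).differentiableAt

theorem dbar_mul {f g : ℂ → ℂ} {z : ℂ} (hf : DifferentiableAt ℝ f z)
    (hg : DifferentiableAt ℝ g z) :
    dbar (fun z => f z * g z) z = dbar f z * g z + f z * dbar g z := by
  rw [(hf.hasFDerivAt.mul hg.hasFDerivAt).dbar_eq (f := fun z => f z * g z), dbar, dbar]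
  simp only [add_apply, smul_apply, smul_eq_mul]
  ring

theorem dbar_comp_of_hasDerivAt {h g : ℂ → ℂ} {h' : ℂ} {z : ℂ} (hh : HasDerivAt h h' (g z))
    (hg : DifferentiableAt ℝ g z) : dbar (fun z => h (g z)) z = h' * dbar g z := by
  rw [((hh.hasFDerivAt.restrictScalars ℝ).comp z hg.hasFDerivAt).dbar_eq (f := fun z => h (g z)),
    dbar]
  simp only [ContinuousLinearMap.comp_apply, ContinuousLinearMap.coe_restrictScalars',
    ContinuousLinearMap.toSpanSingleton_apply, smul_eq_mul]
  ring

theorem dbar_comp_sub_left {f : ℂ → ℂ} {x z : ℂ} (hf : DifferentiableAt ℝ f (x - z)) :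
    dbar (fun t => f (x - t)) z = -dbar f (x - z) := by
  rw [(hf.hasFDerivAt.comp z ((hasFDerivAt_id z).const_sub x)).dbar_eq (f := fun t => f (x - t)),
    dbar]
  simp only [ContinuousLinearMap.comp_apply, neg_apply, map_neg, ContinuousLinearMap.id_apply]
  ring

theorem dbar_convolution {w K : ℂ → ℂ} (hw : LocallyIntegrable w) (hK : ContDiff ℝ 1 K)
    (hKc : HasCompactSupport K) (x : ℂ) :
    dbar (w ⋆[ContinuousLinearMap.mul ℝ ℂ] K) x
      = (w ⋆[ContinuousLinearMap.mul ℝ ℂ] dbar K) x := by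
  have hK' : Continuous (fderiv ℝ K) := hK.continuous_fderiv one_ne_zero
  have hconv (v : ℂ) :=
    convolution_precompR_apply (ContinuousLinearMap.mul ℝ ℂ) hw (hKc.fderiv ℝ) hK' x v
  have hint (v : ℂ) : Integrable (fun t => w t * fderiv ℝ K (x - t) v) :=
    (((hKc.fderiv ℝ).comp_left (g := fun L => L v) rfl).convolutionExists_right
      (ContinuousLinearMap.mul ℝ ℂ) hw (hK'.clm_apply continuous_const) x :)
  rw [(hKc.hasFDerivAt_convolution_right _ hw hK x).dbar_eq, hconv, hconv]
  simp only [convolution_def, dbar, ContinuousLinearMap.mul_apply']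
  rw [← integral_const_mul, ← integral_add (hint 1) ((hint Complex.I).const_mul _),
    ← integral_const_mul]
  congr 1 with t
  ring

theorem ContDiffBump.tendstoLocallyUniformly_normed_convolution {G E : Type*}
    [NormedAddCommGroup G] [NormedSpace ℝ G] [FiniteDimensional ℝ G] [HasContDiffBump G]
    [MeasurableSpace G] [BorelSpace G] {μ : Measure G} [μ.IsAddHaarMeasure]
    [NormedAddCommGroup E] [NormedSpace ℝ E] [CompleteSpace E]
    {ι : Type*} {φ : ι → ContDiffBump (0 : G)} {l : Filter ι}
    (hφ : Tendsto (fun i => (φ i).rOut) l (𝓝 0)) {g : G → E} (hg : Continuous g) :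
    TendstoLocallyUniformly
      (fun i => (φ i).normed μ ⋆[ContinuousLinearMap.lsmul ℝ ℝ, μ] g) g l := by
  refine tendstoLocallyUniformly_iff_forall_tendsto.mpr fun x => ?_
  have hgx : Tendsto (fun y : ι × G => g y.2) (l ×ˢ 𝓝 x) (𝓝 (g x)) :=
    (hg.tendsto x).comp tendsto_snd
  have hconv := ContDiffBump.convolution_tendsto_right (μ := μ) (φ := fun y : ι × G => φ y.1)
    (hφ.comp tendsto_fst) (Eventually.of_forall fun _ => hg.aestronglyMeasurable)
    ((hg.tendsto x).comp tendsto_snd) tendsto_snd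
  exact (hgx.prodMk_nhds hconv).mono_right (nhds_le_uniformity _)

theorem convolution_lsmul_eq_convolution_mul_ofReal (ρ : ℂ → ℝ) (w : ℂ → ℂ) :
    ρ ⋆[ContinuousLinearMap.lsmul ℝ ℝ] w
      = w ⋆[ContinuousLinearMap.mul ℝ ℂ] fun x => (ρ x : ℂ) := by
  ext x
  rw [← convolution_flip, convolution_def, convolution_def]
  simp [Complex.real_smul, mul_comm]

theorem exists_contDiffBump_rOut_tendsto_zero :
    ∃ φ : ℕ → ContDiffBump (0 : ℂ), Tendsto (fun n => (φ n).rOut) atTop (𝓝 0) := by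
  have hr (n : ℕ) : (0 : ℝ) < 1 / (n + 1) := Nat.one_div_pos_of_nat
  exact ⟨fun n => ⟨_, _, half_pos (hr n), half_lt_self (hr n)⟩,
    tendsto_one_div_add_atTop_nhds_zero_nat⟩

theorem differentiable_convolution_of_integral_mul_dbar_eq_zero {w K : ℂ → ℂ}
    (hwi : LocallyIntegrable w)
    (hw : ∀ φ : ℂ → ℂ, ContDiff ℝ 1 φ → HasCompactSupport φ → ∫ z, w z * dbar φ z = 0)
    (hK : ContDiff ℝ 1 K) (hKc : HasCompactSupport K) :
    Differentiable ℂ (w ⋆[ContinuousLinearMap.mul ℝ ℂ] K) := by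
  intro x
  refine (hKc.hasFDerivAt_convolution_right _ hwi hK x).differentiableAt_of_dbar_eq_zero ?_
  have hKx : ContDiff ℝ 1 (fun t => K (x - t)) := hK.comp (contDiff_const.sub contDiff_id)
  have hKxc : HasCompactSupport (fun t => K (x - t)) :=
    hKc.comp_homeomorph (Homeomorph.subLeft x)
  have hdbar (t : ℂ) : dbar K (x - t) = -dbar (fun s => K (x - s)) t := by
    rw [dbar_comp_sub_left (hK.differentiable one_ne_zero _), neg_neg]
  rw [dbar_convolution hwi hK hKc, convolution_def]
  simp only [ContinuousLinearMap.mul_apply', hdbar, mul_neg, integral_neg, hw _ hKx hKxc,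
    neg_zero]

theorem differentiable_of_integral_mul_dbar_eq_zero {w : ℂ → ℂ} (hwc : Continuous w)
    (hw : ∀ φ : ℂ → ℂ, ContDiff ℝ 1 φ → HasCompactSupport φ → ∫ z, w z * dbar φ z = 0) :
    Differentiable ℂ w := by
  obtain ⟨φ, hφ⟩ := exists_contDiffBump_rOut_tendsto_zero
  have hF (n : ℕ) :
      Differentiable ℂ ((φ n).normed volume ⋆[ContinuousLinearMap.lsmul ℝ ℝ] w) := by
    rw [convolution_lsmul_eq_convolution_mul_ofReal]
    exact differentiable_convolution_of_integral_mul_dbar_eq_zero hwc.locallyIntegrable hw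
      (Complex.ofRealCLM.contDiff.comp (φ n).contDiff_normed)
      ((φ n).hasCompactSupport_normed.comp_left Complex.ofReal_zero)
  rw [← differentiableOn_univ]
  exact (ContDiffBump.tendstoLocallyUniformly_normed_convolution hφ hwc).tendstoLocallyUniformlyOn
    |>.differentiableOn (Eventually.of_forall fun n => (hF n).differentiableOn) isOpen_univ

theorem integral_mul_cexp_mul_dbar_eq_zero {g u : ℂ → ℂ} (hg : ContDiff ℝ 1 g)
    (h : ∀ φ : ℂ → ℂ, ContDiff ℝ 1 φ → HasCompactSupport φ →
      ∫ z, u z * (-(dbar φ z) + dbar g z * φ z) = 0)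
    {φ : ℂ → ℂ} (hφ : ContDiff ℝ 1 φ) (hφc : HasCompactSupport φ) :
    ∫ z, u z * Complex.exp (g z) * dbar φ z = 0 := by
  have hexp : ContDiff ℝ 1 (fun z => Complex.exp (g z)) :=
    ((Complex.contDiff_exp (𝕜 := ℂ)).restrict_scalars ℝ).comp hg
  have hdbar (z : ℂ) : dbar (fun z => Complex.exp (g z) * φ z) z
      = Complex.exp (g z) * (dbar g z * φ z + dbar φ z) := by
    rw [dbar_mul (hexp.differentiable one_ne_zero z) (hφ.differentiable one_ne_zero z),
      dbar_comp_of_hasDerivAt (Complex.hasDerivAt_exp _) (hg.differentiable one_ne_zero z)]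
    ring
  have hψ := h _ (hexp.mul hφ) hφc.mul_left
  simp only [hdbar] at hψ
  rw [← neg_eq_zero, ← integral_neg, ← hψ]
  congr 1 with z
  ring

/-- Uniqueness: a continuous distributional solution of `(∂̄ + ∂̄g)u = 0`
(`g` being `C¹` with compact support) that vanishes at infinity is identically `0`. -/
theorem stmt2 (g : ℂ → ℂ) (hg : ContDiff ℝ 1 g) (hgc : HasCompactSupport g)
    (u : ℂ → ℂ) (hu : Continuous u)
    (hu0 : Tendsto u (cocompact ℂ) (𝓝 0))
    (h : ∀ φ : ℂ → ℂ, ContDiff ℝ 1 φ → HasCompactSupport φ →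
      ∫ z : ℂ, u z * (-(dbar φ z) + dbar g z * φ z) = 0) :
    ∀ z : ℂ, u z = 0 := by
  have hw : Differentiable ℂ fun z => u z * Complex.exp (g z) :=
    differentiable_of_integral_mul_dbar_eq_zero (hu.mul (Complex.continuous_exp.comp hg.continuous))
      fun φ hφ hφc => integral_mul_cexp_mul_dbar_eq_zero hg h hφ hφc
  have hexp : (fun z => Complex.exp (g z)) =ᶠ[cocompact ℂ] fun _ => 1 := by
    filter_upwards [hgc.compl_mem_cocompact] with z hz
    simp [image_eq_zero_of_notMem_tsupport hz]
  have hw0 : Tendsto (fun z => u z * Complex.exp (g z)) (cocompact ℂ) (𝓝 0) := by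
    simpa using hu0.mul (tendsto_const_nhds.congr' hexp.symm)
  intro z
  simpa [Complex.exp_ne_zero] using hw.apply_eq_of_tendsto_cocompact z hw0
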